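/- Consider the closed-loop system of Proposition 2 for the planar flexible-joint robot: ζ̇ = F_ζ ∇H_ζ(ζ) on ℝ^{12}, with parameters a1,a2,b > 0, a1·a2 > b², I_m1,I_m2 > 0, K_s diagonal positive definite, K_c, R_cl, R_cm symmetric positive definite, α_li,α_mi,β_li,β_mi > 0 and q_* ∈ ℝ². Let ζ(t) = (q(t),p(t),x_cl(t),x_cm(t)) be a differentiable solution such that for all t: p(t) = 0, q_l(t) − q_* + x_cl(t) = 0, and K_c x_cm(t) = −∇Φ_m(q_m(t) − q_* + x_cm(t)). Then ζ(t) = ζ_* = (q_*,q_*,0,0,0,0) for all t. -/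

import Mathlib

open Matrix

noncomputable section

abbrev I4 := Fin 2 ⊕ Fin 2
abbrev I8 := I4 ⊕ I4
abbrev I12 := I8 ⊕ (Fin 2 ⊕ Fin 2)
abbrev E8 := EuclideanSpace ℝ I8
abbrev E12 := EuclideanSpace ℝ I12

def Ml (a1 a2 b θ : ℝ) : Matrix (Fin 2) (Fin 2) ℝ :=
  !![a1 + a2 + 2 * b * Real.cos θ, a2 + b * Real.cos θ;
     a2 + b * Real.cos θ, a2]

def Mfull (a1 a2 b Im1 Im2 θ : ℝ) : Matrix I4 I4 ℝ :=
  Matrix.fromBlocks (Ml a1 a2 b θ) 0 0 (Matrix.diagonal ![Im1, Im2])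

def qlv (ζ : E12) : Fin 2 → ℝ := fun i => ζ (Sum.inl (Sum.inl (Sum.inl i)))
def qmv (ζ : E12) : Fin 2 → ℝ := fun i => ζ (Sum.inl (Sum.inl (Sum.inr i)))
def pvec (ζ : E12) : I4 → ℝ := fun j => ζ (Sum.inl (Sum.inr j))
def xcl (ζ : E12) : Fin 2 → ℝ := fun i => ζ (Sum.inr (Sum.inl i))
def xcm (ζ : E12) : Fin 2 → ℝ := fun i => ζ (Sum.inr (Sum.inr i))
def ql2 (ζ : E12) : ℝ := ζ (Sum.inl (Sum.inl (Sum.inl 1)))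

def Hrobot (a1 a2 b Im1 Im2 : ℝ) (Ks : Matrix (Fin 2) (Fin 2) ℝ) (ζ : E12) : ℝ :=
  (1 / 2 : ℝ) * (pvec ζ ⬝ᵥ ((Mfull a1 a2 b Im1 Im2 (ql2 ζ))⁻¹).mulVec (pvec ζ)) +
  (1 / 2 : ℝ) * ((fun i => qlv ζ i - qmv ζ i) ⬝ᵥ Ks.mulVec fun i => qlv ζ i - qmv ζ i)

def Hzeta (a1 a2 b Im1 Im2 : ℝ) (Ks Kc : Matrix (Fin 2) (Fin 2) ℝ)
    (αl βl αm βm : Fin 2 → ℝ) (qstar : Fin 2 → ℝ) (ζ : E12) : ℝ :=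
  Hrobot a1 a2 b Im1 Im2 Ks ζ +
  (∑ i, (αl i / βl i) * Real.log (Real.cosh (βl i * (qlv ζ i - qstar i + xcl ζ i)))) +
  (∑ i, (αm i / βm i) * Real.log (Real.cosh (βm i * (qmv ζ i - qstar i + xcm ζ i)))) +
  (1 / 2 : ℝ) * (xcm ζ ⬝ᵥ Kc.mulVec (xcm ζ))

def Gam : Matrix I4 (Fin 2) ℝ := Matrix.fromRows 1 (-1)

/-- The closed-loop matrix `F_ζ` of Proposition 2. -/
def Fzeta (Dl Dm Rcl Rcm : Matrix (Fin 2) (Fin 2) ℝ) : Matrix I12 I12 ℝ :=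
  Matrix.fromBlocks
    (Matrix.fromBlocks 0 1 (-1) (-(Matrix.fromBlocks Dl 0 0 Dm)))
    (Matrix.fromBlocks 0 0 Gam 0)
    0
    (Matrix.fromBlocks (-Rcl) 0 0 (-Rcm))

/-- The desired equilibrium `ζ_* = (q_*, q_*, 0, 0, 0, 0)`. -/
def zetastar (qstar : Fin 2 → ℝ) : E12 := WithLp.toLp 2 fun (i : I12) =>
  match i with
  | Sum.inl (Sum.inl (Sum.inl i)) => qstar i
  | Sum.inl (Sum.inl (Sum.inr i)) => qstar i
  | _ => 0

lemma coord_abs_le_norm {ι : Type*} [Fintype ι] (x : EuclideanSpace ℝ ι) (i : ι) :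
    |x i| ≤ ‖x‖ := by
  rw [EuclideanSpace.norm_eq, ← Real.sqrt_sq_eq_abs]
  apply Real.sqrt_le_sqrt
  simp only [Real.norm_eq_abs, sq_abs]
  exact Finset.single_le_sum (fun j _ => sq_nonneg (x j)) (Finset.mem_univ i)

lemma det_Mfull_pos (a1 a2 b Im1 Im2 : ℝ) (ha1 : 0 < a1) (ha2 : 0 < a2)
    (hab : b ^ 2 < a1 * a2) (hIm1 : 0 < Im1) (hIm2 : 0 < Im2) (θ : ℝ) :
    0 < (Mfull a1 a2 b Im1 Im2 θ).det := by
  rw [Mfull, Matrix.det_fromBlocks_zero₂₁, Matrix.det_diagonal, Fin.prod_univ_two]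
  have h1 : (Ml a1 a2 b θ).det = a1 * a2 - (b * Real.cos θ)^2 := by
    rw [Ml, Matrix.det_fin_two_of]; ring
  rw [h1]
  simp only [Matrix.cons_val_zero, Matrix.cons_val_one, Matrix.head_cons]
  have hc : Real.cos θ ^ 2 ≤ 1 := Real.cos_sq_le_one θ
  have h2 : (b * Real.cos θ)^2 ≤ b^2 := by nlinarith [sq_nonneg b]
  have h3 : 0 < a1 * a2 - (b * Real.cos θ)^2 := by nlinarith
  positivity

lemma cont_Mfull (a1 a2 b Im1 Im2 : ℝ) :
    Continuous (fun y : E12 => Mfull a1 a2 b Im1 Im2 (ql2 y)) := by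
  have hq : Continuous (fun y : E12 => ql2 y) :=
    (EuclideanSpace.proj (Sum.inl (Sum.inl (Sum.inl 1)) : I12)).continuous
  apply continuous_matrix
  rintro (i | i) (j | j) <;>
    simp only [Mfull, Matrix.fromBlocks_apply₁₁, Matrix.fromBlocks_apply₁₂,
      Matrix.fromBlocks_apply₂₁, Matrix.fromBlocks_apply₂₂, Matrix.zero_apply]
  · fin_cases i <;> fin_cases j <;>
      simp only [Ml, Fin.zero_eta, Fin.mk_one, Fin.isValue, Matrix.of_apply,
        Matrix.cons_val', Matrix.cons_val_zero, Matrix.cons_val_one, Matrix.head_cons,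
        Matrix.empty_val', Matrix.cons_val_fin_one, Matrix.head_fin_const] <;>
      fun_prop
  · exact continuous_const
  · exact continuous_const
  · exact continuous_const

lemma cont_inv (a1 a2 b Im1 Im2 : ℝ) (ha1 : 0 < a1) (ha2 : 0 < a2)
    (hab : b ^ 2 < a1 * a2) (hIm1 : 0 < Im1) (hIm2 : 0 < Im2) (x : E12) :
    ContinuousAt (fun y : E12 => (Mfull a1 a2 b Im1 Im2 (ql2 y))⁻¹) x := by
  have hdet : (Mfull a1 a2 b Im1 Im2 (ql2 x)).det ≠ 0 :=
    (det_Mfull_pos a1 a2 b Im1 Im2 ha1 ha2 hab hIm1 hIm2 _).ne'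
  have h1 : ContinuousAt Ring.inverse (Mfull a1 a2 b Im1 Im2 (ql2 x)).det := by
    rw [Ring.inverse_eq_inv']
    exact continuousAt_inv₀ hdet
  exact ContinuousAt.comp (x := x) (f := fun y : E12 => Mfull a1 a2 b Im1 Im2 (ql2 y))
    (g := Inv.inv) (continuousAt_matrix_inv _ h1) (cont_Mfull a1 a2 b Im1 Im2).continuousAt


lemma kinetic_deriv (a1 a2 b Im1 Im2 : ℝ) (ha1 : 0 < a1) (ha2 : 0 < a2)
    (hab : b ^ 2 < a1 * a2) (hIm1 : 0 < Im1) (hIm2 : 0 < Im2) (x : E12)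
    (hp : pvec x = 0) :
    HasFDerivAt (fun y : E12 =>
      (1/2 : ℝ) * (pvec y ⬝ᵥ ((Mfull a1 a2 b Im1 Im2 (ql2 y))⁻¹).mulVec (pvec y)))
      (0 : E12 →L[ℝ] ℝ) x := by
  have hcont : ∀ j k : I4, ContinuousAt
      (fun y : E12 => (Mfull a1 a2 b Im1 Im2 (ql2 y))⁻¹ j k) x := by
    intro j k
    have h1 : Continuous (fun M : Matrix I4 I4 ℝ => M j k) :=
      (continuous_apply k).comp (continuous_apply j)
    exact ContinuousAt.comp (x := x)
      (f := fun y : E12 => (Mfull a1 a2 b Im1 Im2 (ql2 y))⁻¹)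
      (g := fun M : Matrix I4 I4 ℝ => M j k) h1.continuousAt
      (cont_inv a1 a2 b Im1 Im2 ha1 ha2 hab hIm1 hIm2 x)
  set N : E12 → Matrix I4 I4 ℝ := fun y => (Mfull a1 a2 b Im1 Im2 (ql2 y))⁻¹ with hN
  have hcontc : ContinuousAt (fun y : E12 => ∑ j : I4, ∑ k : I4, |N y j k|) x :=
    tendsto_finset_sum _ fun j _ => tendsto_finset_sum _ fun k _ => (hcont j k).abs
  have hbound : ∀ h : E12, |pvec (x + h) ⬝ᵥ (N (x + h)).mulVec (pvec (x + h))|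
      ≤ (∑ j : I4, ∑ k : I4, |N (x + h) j k|) * (‖h‖ * ‖h‖) := by
    intro h
    have hph : ∀ j, pvec (x + h) j = h (Sum.inl (Sum.inr j)) := by
      intro j
      have : pvec x j = 0 := by rw [hp]; rfl
      simp only [pvec] at this ⊢
      rw [PiLp.add_apply, this, zero_add]
    have hple : ∀ j : I4, |pvec (x + h) j| ≤ ‖h‖ := by
      intro j; rw [hph j]; exact coord_abs_le_norm h _
    rw [Finset.sum_mul]
    calc |pvec (x + h) ⬝ᵥ (N (x + h)).mulVec (pvec (x + h))|
        ≤ ∑ j : I4, |pvec (x + h) j * ((N (x + h)).mulVec (pvec (x + h)) j)| :=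
          Finset.abs_sum_le_sum_abs _ _
      _ ≤ ∑ j : I4, (∑ k : I4, |N (x + h) j k|) * (‖h‖ * ‖h‖) := by
          apply Finset.sum_le_sum
          intro j _
          rw [abs_mul, Matrix.mulVec]
          calc |pvec (x + h) j| * |(N (x + h) j) ⬝ᵥ pvec (x + h)|
              ≤ ‖h‖ * ∑ k : I4, |N (x + h) j k| * ‖h‖ := by
                apply mul_le_mul (hple j) ?_ (abs_nonneg _) (norm_nonneg _)
                refine le_trans (Finset.abs_sum_le_sum_abs _ _) ?_
                apply Finset.sum_le_sum
                intro k _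
                rw [abs_mul]
                exact mul_le_mul_of_nonneg_left (hple k) (abs_nonneg _)
            _ = (∑ k : I4, |N (x + h) j k|) * (‖h‖ * ‖h‖) := by
                rw [Finset.sum_mul, Finset.mul_sum]; congr 1; funext k; ring
  rw [hasFDerivAt_iff_isLittleO_nhds_zero]
  have hfx : pvec x ⬝ᵥ (N x).mulVec (pvec x) = 0 := by
    rw [hp]; simp [dotProduct]
  set C : ℝ := ∑ j : I4, ∑ k : I4, |N x j k| with hC
  have hCnn : 0 ≤ C := by rw [hC]; positivity
  rw [Asymptotics.isLittleO_iff]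
  intro ε hε
  have hδpos : 0 < ε / (C + 1) := by positivity
  have hc1 : ∀ᶠ h : E12 in nhds 0, (∑ j : I4, ∑ k : I4, |N (x + h) j k|) < C + 1 := by
    have ht : Filter.Tendsto (fun h : E12 => ∑ j : I4, ∑ k : I4, |N (x + h) j k|)
        (nhds 0) (nhds C) := by
      have h0 : Filter.Tendsto (fun h : E12 => x + h) (nhds 0) (nhds x) := by
        simpa using (continuous_add_left x).tendsto (0 : E12)
      exact Filter.Tendsto.comp (g := fun y : E12 => ∑ j : I4, ∑ k : I4, |N y j k|)
        hcontc h0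
    exact ht (Iio_mem_nhds (by linarith))
  filter_upwards [hc1, Metric.ball_mem_nhds (0 : E12) hδpos] with h h1 h2
  rw [Metric.mem_ball, dist_zero_right] at h2
  have key : |pvec (x + h) ⬝ᵥ (N (x + h)).mulVec (pvec (x + h))| ≤ (C+1) * (‖h‖ * ‖h‖) := by
    refine le_trans (hbound h) (mul_le_mul_of_nonneg_right h1.le (by positivity))
  rw [hfx]
  simp only [mul_zero, sub_zero, ContinuousLinearMap.zero_apply, Real.norm_eq_abs, abs_mul]
  have h3 : ‖h‖ ≤ ε / (C + 1) := h2.le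
  have hn : (0:ℝ) ≤ ‖h‖ := norm_nonneg h
  calc |(1/2 : ℝ)| * |pvec (x + h) ⬝ᵥ (N (x + h)).mulVec (pvec (x + h))|
      ≤ 1 * ((C+1) * (‖h‖ * ‖h‖)) := by
        apply mul_le_mul ?_ key (abs_nonneg _) (by norm_num)
        rw [abs_of_nonneg (by norm_num : (0:ℝ) ≤ 1/2)]; norm_num
    _ = ((C+1) * ‖h‖) * ‖h‖ := by ring
    _ ≤ ε * ‖h‖ := by
        apply mul_le_mul_of_nonneg_right ?_ hn
        calc (C+1) * ‖h‖ ≤ (C+1) * (ε / (C+1)) :=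
              mul_le_mul_of_nonneg_left h3 (by linarith)
          _ = ε := by field_simp


def iql (i : Fin 2) : I12 := Sum.inl (Sum.inl (Sum.inl i))
def iqm (i : Fin 2) : I12 := Sum.inl (Sum.inl (Sum.inr i))
def ip (j : I4) : I12 := Sum.inl (Sum.inr j)
def icl (i : Fin 2) : I12 := Sum.inr (Sum.inl i)
def icm (i : Fin 2) : I12 := Sum.inr (Sum.inr i)

def eproj (i : I12) : E12 →L[ℝ] ℝ := EuclideanSpace.proj i

def gvec (ks αm βm qstar : Fin 2 → ℝ) (x : E12) : E12 := WithLp.toLp 2 fun (idx : I12) =>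
  match idx with
  | Sum.inl (Sum.inl (Sum.inl i)) => ks i * (qlv x i - qmv x i)
  | Sum.inl (Sum.inl (Sum.inr i)) =>
      -(ks i * (qlv x i - qmv x i)) +
        αm i * Real.tanh (βm i * (qmv x i - qstar i + xcm x i))
  | _ => 0

lemma hasDerivAt_logcosh (z : ℝ) :
    HasDerivAt (fun z => Real.log (Real.cosh z)) (Real.tanh z) z := by
  have h := (Real.hasDerivAt_cosh z).log (Real.cosh_pos z).ne'
  simpa [Real.tanh_eq_sinh_div_cosh] using h

set_option maxHeartbeats 2000000 in
lemma grad_eq (a1 a2 b Im1 Im2 : ℝ) (ha1 : 0 < a1) (ha2 : 0 < a2)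
    (hab : b ^ 2 < a1 * a2) (hIm1 : 0 < Im1) (hIm2 : 0 < Im2)
    (ks : Fin 2 → ℝ) (Kc : Matrix (Fin 2) (Fin 2) ℝ)
    (hKcsymm : ∀ i j, Kc i j = Kc j i)
    (αl βl αm βm qstar : Fin 2 → ℝ) (hβm : ∀ i, βm i ≠ 0)
    (x : E12) (hp : pvec x = 0)
    (hzl : ∀ i, qlv x i - qstar i + xcl x i = 0)
    (hxcm : Kc.mulVec (xcm x) =
      fun i => -(αm i * Real.tanh (βm i * (qmv x i - qstar i + xcm x i)))) :
    gradient (Hzeta a1 a2 b Im1 Im2 (Matrix.diagonal ks) Kc αl βl αm βm qstar) x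
      = gvec ks αm βm qstar x := by
  have hH : Hzeta a1 a2 b Im1 Im2 (Matrix.diagonal ks) Kc αl βl αm βm qstar
      = fun y : E12 =>
      ((((1/2 : ℝ) * (pvec y ⬝ᵥ ((Mfull a1 a2 b Im1 Im2 (ql2 y))⁻¹).mulVec (pvec y)) +
        (1/2 : ℝ) * ∑ i : Fin 2, ks i *
          ((y (iql i) - y (iqm i)) * (y (iql i) - y (iqm i)))) +
        ∑ i : Fin 2, (αl i / βl i) *
          Real.log (Real.cosh (βl i * (y (iql i) - qstar i + y (icl i))))) +
        ∑ i : Fin 2, (αm i / βm i) *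
          Real.log (Real.cosh (βm i * (y (iqm i) - qstar i + y (icm i))))) +
        (1/2 : ℝ) * ∑ i : Fin 2, ∑ j : Fin 2, y (icm i) * (Kc i j * y (icm j)) := by
    funext y
    simp only [Hzeta, Hrobot]
    set K := (1/2 : ℝ) * (pvec y ⬝ᵥ ((Mfull a1 a2 b Im1 Im2 (ql2 y))⁻¹).mulVec (pvec y)) with hK
    simp only [dotProduct]
    simp only [Matrix.mulVec_diagonal]
    simp only [Matrix.mulVec, dotProduct]
    simp only [qlv, qmv, xcl, xcm, iql, iqm, icl, icm, Fin.sum_univ_two, Finset.mul_sum]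
    ring
  have hprj : ∀ i : I12, HasFDerivAt (fun y : E12 => y i) (eproj i) x := by
    intro i
    have h := (eproj i).hasFDerivAt (x := x)
    exact h
  have P1 := kinetic_deriv a1 a2 b Im1 Im2 ha1 ha2 hab hIm1 hIm2 x hp
  have hw : ∀ i : Fin 2, HasFDerivAt (fun y : E12 => y (iql i) - y (iqm i))
      (eproj (iql i) - eproj (iqm i)) x := fun i => (hprj _).sub (hprj _)
  have PS := HasFDerivAt.const_mul
    (HasFDerivAt.fun_sum (u := Finset.univ)
      (fun i _ => ((hw i).mul (hw i)).const_mul (ks i))) (1/2 : ℝ)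
  have hφl : ∀ i : Fin 2, HasFDerivAt
      (fun y : E12 => (αl i / βl i) *
        Real.log (Real.cosh (βl i * (y (iql i) - qstar i + y (icl i)))))
      ((αl i / βl i) • (Real.tanh (βl i * (x (iql i) - qstar i + x (icl i))) •
        (βl i • (eproj (iql i) + eproj (icl i))))) x := by
    intro i
    have hin : HasFDerivAt (fun y : E12 => βl i * (y (iql i) - qstar i + y (icl i)))
        (βl i • (eproj (iql i) + eproj (icl i))) x :=
      (((hprj (iql i)).sub_const (qstar i)).add (hprj (icl i))).const_mul (βl i)
    exact ((hasDerivAt_logcosh _).comp_hasFDerivAt x hin).const_mul _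
  have hφm : ∀ i : Fin 2, HasFDerivAt
      (fun y : E12 => (αm i / βm i) *
        Real.log (Real.cosh (βm i * (y (iqm i) - qstar i + y (icm i)))))
      ((αm i / βm i) • (Real.tanh (βm i * (x (iqm i) - qstar i + x (icm i))) •
        (βm i • (eproj (iqm i) + eproj (icm i))))) x := by
    intro i
    have hin : HasFDerivAt (fun y : E12 => βm i * (y (iqm i) - qstar i + y (icm i)))
        (βm i • (eproj (iqm i) + eproj (icm i))) x :=
      (((hprj (iqm i)).sub_const (qstar i)).add (hprj (icm i))).const_mul (βm i)
    exact ((hasDerivAt_logcosh _).comp_hasFDerivAt x hin).const_mul _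
  have PL := HasFDerivAt.fun_sum (u := Finset.univ) (fun i _ => hφl i)
  have PM := HasFDerivAt.fun_sum (u := Finset.univ) (fun i _ => hφm i)
  have PK := HasFDerivAt.const_mul
    (HasFDerivAt.fun_sum (u := Finset.univ) (fun i _ =>
      HasFDerivAt.fun_sum (u := Finset.univ) (fun j _ =>
        (hprj (icm i)).mul ((hprj (icm j)).const_mul (Kc i j))))) (1/2 : ℝ)
  have hL := (((P1.add PS).add PL).add PM).add PK
  rw [hH]
  refine Eq.trans (hasFDerivAt_iff_hasGradientAt.mp hL).gradient ?_
  ext idx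
  have hcoord : ∀ v : E12,
      v idx = (inner ℝ v (EuclideanSpace.single idx (1:ℝ)) : ℝ) := by
    intro v
    rw [EuclideanSpace.inner_single_right]
    simp
  refine Eq.trans (hcoord _) ?_
  rw [InnerProductSpace.toDual_symm_apply]
  obtain (((i | i) | (j | j)) | (i | i)) := idx
  · -- q_l coordinate
    have hz := hzl i
    simp only [qlv, xcl] at hz
    fin_cases i <;>
    · simp only [Fin.zero_eta, Fin.mk_one] at hz
      simp only [ContinuousLinearMap.add_apply, ContinuousLinearMap.coe_smul',
        Pi.smul_apply, ContinuousLinearMap.coe_sum', Finset.sum_apply,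
        ContinuousLinearMap.coe_sub', Pi.sub_apply, ContinuousLinearMap.coe_add',
        Pi.add_apply, ContinuousLinearMap.zero_apply, smul_eq_mul, eproj,
        PiLp.proj_apply, EuclideanSpace.single_apply, iql, iqm, icl, icm, ip,
        gvec, PiLp.toLp_apply, qlv, qmv, xcm, Fin.sum_univ_two, Fin.isValue, Fin.zero_eta, Fin.mk_one,
        Sum.inl.injEq, Sum.inr.injEq, reduceCtorEq]
      simp only [hz, mul_zero, Real.tanh_zero]
      norm_num
      try ring
  · -- q_m coordinate
    fin_cases i <;>
    · simp only [ContinuousLinearMap.add_apply, ContinuousLinearMap.coe_smul',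
        Pi.smul_apply, ContinuousLinearMap.coe_sum', Finset.sum_apply,
        ContinuousLinearMap.coe_sub', Pi.sub_apply, ContinuousLinearMap.coe_add',
        Pi.add_apply, ContinuousLinearMap.zero_apply, smul_eq_mul, eproj,
        PiLp.proj_apply, EuclideanSpace.single_apply, iql, iqm, icl, icm, ip,
        gvec, PiLp.toLp_apply, qlv, qmv, xcm, Fin.sum_univ_two, Fin.isValue, Fin.zero_eta, Fin.mk_one,
        Sum.inl.injEq, Sum.inr.injEq, reduceCtorEq]
      norm_num
      field_simp [hβm 0, hβm 1]
      try ring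
  · -- p_l coordinate
    fin_cases j <;>
    · simp only [ContinuousLinearMap.add_apply, ContinuousLinearMap.coe_smul',
        Pi.smul_apply, ContinuousLinearMap.coe_sum', Finset.sum_apply,
        ContinuousLinearMap.coe_sub', Pi.sub_apply, ContinuousLinearMap.coe_add',
        Pi.add_apply, ContinuousLinearMap.zero_apply, smul_eq_mul, eproj,
        PiLp.proj_apply, EuclideanSpace.single_apply, iql, iqm, icl, icm, ip,
        gvec, PiLp.toLp_apply, qlv, qmv, xcm, Fin.sum_univ_two, Fin.isValue, Fin.zero_eta, Fin.mk_one,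
        Sum.inl.injEq, Sum.inr.injEq, reduceCtorEq]
      norm_num
  · -- p_m coordinate
    fin_cases j <;>
    · simp only [ContinuousLinearMap.add_apply, ContinuousLinearMap.coe_smul',
        Pi.smul_apply, ContinuousLinearMap.coe_sum', Finset.sum_apply,
        ContinuousLinearMap.coe_sub', Pi.sub_apply, ContinuousLinearMap.coe_add',
        Pi.add_apply, ContinuousLinearMap.zero_apply, smul_eq_mul, eproj,
        PiLp.proj_apply, EuclideanSpace.single_apply, iql, iqm, icl, icm, ip,
        gvec, PiLp.toLp_apply, qlv, qmv, xcm, Fin.sum_univ_two, Fin.isValue, Fin.zero_eta, Fin.mk_one,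
        Sum.inl.injEq, Sum.inr.injEq, reduceCtorEq]
      norm_num
  · -- x_cl coordinate
    have hz := hzl i
    simp only [qlv, xcl] at hz
    fin_cases i <;>
    · simp only [Fin.zero_eta, Fin.mk_one] at hz
      simp only [ContinuousLinearMap.add_apply, ContinuousLinearMap.coe_smul',
        Pi.smul_apply, ContinuousLinearMap.coe_sum', Finset.sum_apply,
        ContinuousLinearMap.coe_sub', Pi.sub_apply, ContinuousLinearMap.coe_add',
        Pi.add_apply, ContinuousLinearMap.zero_apply, smul_eq_mul, eproj,
        PiLp.proj_apply, EuclideanSpace.single_apply, iql, iqm, icl, icm, ip,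
        gvec, PiLp.toLp_apply, qlv, qmv, xcm, Fin.sum_univ_two, Fin.isValue, Fin.zero_eta, Fin.mk_one,
        Sum.inl.injEq, Sum.inr.injEq, reduceCtorEq]
      simp only [hz, mul_zero, Real.tanh_zero]
      norm_num
      try ring
  · -- x_cm coordinate
    have hx := congrFun hxcm i
    simp only [Matrix.mulVec, dotProduct] at hx
    simp only [xcm, qmv, Fin.sum_univ_two] at hx
    have hsym01 := hKcsymm 0 1
    have hsym10 := hKcsymm 1 0
    fin_cases i <;>
    · simp only [Fin.zero_eta, Fin.mk_one] at hx
      simp only [ContinuousLinearMap.add_apply, ContinuousLinearMap.coe_smul',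
        Pi.smul_apply, ContinuousLinearMap.coe_sum', Finset.sum_apply,
        ContinuousLinearMap.coe_sub', Pi.sub_apply, ContinuousLinearMap.coe_add',
        Pi.add_apply, ContinuousLinearMap.zero_apply, smul_eq_mul, eproj,
        PiLp.proj_apply, EuclideanSpace.single_apply, iql, iqm, icl, icm, ip,
        gvec, PiLp.toLp_apply, qlv, qmv, xcm, Fin.sum_univ_two, Fin.isValue, Fin.zero_eta, Fin.mk_one,
        Sum.inl.injEq, Sum.inr.injEq, reduceCtorEq]
      norm_num
      field_simp [hβm 0, hβm 1]
      try linear_combination 2 * hx + x (Sum.inr (Sum.inr 1)) * hsym10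
      try linear_combination 2 * hx + x (Sum.inr (Sum.inr 0)) * hsym01


set_option maxHeartbeats 1000000 in
/-- the invariant-set implication chain (35): a solution of
`ζ̇ = F_ζ ∇H_ζ(ζ)` along which `p ≡ 0`, `z_l = q_l − q_* + x_cl ≡ 0` and
`K_c x_cm ≡ −∇Φ_m(z_m)` (with `∇Φ_m(z)_i = α_mi tanh(β_mi z_i)`) must coincide with the
equilibrium `ζ_* = (q_*, q_*, 0, 0, 0, 0)`. -/
theorem invariant_set_saturated (a1 a2 b Im1 Im2 : ℝ)
    (ha1 : 0 < a1) (ha2 : 0 < a2) (hb : 0 < b) (hab : b ^ 2 < a1 * a2)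
    (hIm1 : 0 < Im1) (hIm2 : 0 < Im2)
    (ks dl dm : Fin 2 → ℝ) (hks : ∀ i, 0 < ks i) (hdl : ∀ i, 0 < dl i)
    (hdm : ∀ i, 0 < dm i)
    (Kc Rcl Rcm : Matrix (Fin 2) (Fin 2) ℝ)
    (hKc : Kc.PosDef) (hRcl : Rcl.PosDef) (hRcm : Rcm.PosDef)
    (αl βl αm βm : Fin 2 → ℝ)
    (hαl : ∀ i, 0 < αl i) (hβl : ∀ i, 0 < βl i)
    (hαm : ∀ i, 0 < αm i) (hβm : ∀ i, 0 < βm i)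
    (qstar : Fin 2 → ℝ)
    (ζ : ℝ → E12)
    (hζ : ∀ t, HasDerivAt ζ
      (WithLp.toLp 2 ((Fzeta (Matrix.diagonal dl) (Matrix.diagonal dm) Rcl Rcm).mulVec
        fun i => gradient
          (Hzeta a1 a2 b Im1 Im2 (Matrix.diagonal ks) Kc αl βl αm βm qstar) (ζ t) i)) t)
    (hp : ∀ t, pvec (ζ t) = 0)
    (hzl : ∀ t i, qlv (ζ t) i - qstar i + xcl (ζ t) i = 0)
    (hxcm : ∀ t, Kc.mulVec (xcm (ζ t)) =
      fun i => -(αm i * Real.tanh (βm i * (qmv (ζ t) i - qstar i + xcm (ζ t) i)))) :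
    ∀ t, ζ t = zetastar qstar := by
  intro t
  have hsymm : ∀ i j, Kc i j = Kc j i := fun i j => by
    simpa using hKc.1.apply j i
  have hg := grad_eq a1 a2 b Im1 Im2 ha1 ha2 hab hIm1 hIm2 ks Kc hsymm αl βl αm βm
    qstar (fun i => (hβm i).ne') (ζ t) (hp t) (hzl t) (hxcm t)
  -- the p-components of the vector field vanish
  have hpzero : ∀ j : I4,
      ((Fzeta (Matrix.diagonal dl) (Matrix.diagonal dm) Rcl Rcm).mulVec
        fun i => gradient
          (Hzeta a1 a2 b Im1 Im2 (Matrix.diagonal ks) Kc αl βl αm βm qstar) (ζ t) i)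
        (Sum.inl (Sum.inr j)) = 0 := by
    intro j
    have h1 := ((eproj (Sum.inl (Sum.inr j))).hasFDerivAt).comp_hasDerivAt t (hζ t)
    have hzero : (fun s : ℝ => ζ s (Sum.inl (Sum.inr j))) = fun _ => (0:ℝ) :=
      funext fun s => congrFun (hp s) j
    have h2 : HasDerivAt (fun s : ℝ => ζ s (Sum.inl (Sum.inr j)))
        (((Fzeta (Matrix.diagonal dl) (Matrix.diagonal dm) Rcl Rcm).mulVec
        fun i => gradient
          (Hzeta a1 a2 b Im1 Im2 (Matrix.diagonal ks) Kc αl βl αm βm qstar) (ζ t) i)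
        (Sum.inl (Sum.inr j))) t := h1
    rw [hzero] at h2
    exact h2.unique (hasDerivAt_const t 0)
  have hrow : ∀ j : I4,
      ((Fzeta (Matrix.diagonal dl) (Matrix.diagonal dm) Rcl Rcm).mulVec
        fun i => gvec ks αm βm qstar (ζ t) i) (Sum.inl (Sum.inr j)) = 0 := by
    intro j
    rw [← hpzero j]
    congr 1
    funext i
    rw [hg]
  -- evaluate the two p-row families
  have hwzero : ∀ i : Fin 2, qlv (ζ t) i - qmv (ζ t) i = 0 := by
    intro i
    have h := hrow (Sum.inl i)
    rw [Matrix.mulVec, dotProduct, Fintype.sum_sum_type,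
      Fintype.sum_sum_type, Fintype.sum_sum_type, Fintype.sum_sum_type] at h
    simp only [Fzeta, Gam, Matrix.fromBlocks_apply₁₁, Matrix.fromBlocks_apply₁₂,
      Matrix.fromBlocks_apply₂₁, Matrix.fromBlocks_apply₂₂, Matrix.zero_apply,
      Matrix.one_apply, Matrix.neg_apply, Matrix.fromRows_apply_inl,
      Matrix.fromRows_apply_inr, gvec, PiLp.toLp_apply, Fin.sum_univ_two, Sum.inl.injEq, Sum.inr.injEq,
      reduceCtorEq] at h
    have hk := (hks i).ne'
    fin_cases i <;> simp at h hk ⊢ <;> exact h.resolve_left hk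
  have htanh : ∀ i : Fin 2,
      Real.tanh (βm i * (qmv (ζ t) i - qstar i + xcm (ζ t) i)) = 0 := by
    intro i
    have h := hrow (Sum.inr i)
    rw [Matrix.mulVec, dotProduct, Fintype.sum_sum_type,
      Fintype.sum_sum_type, Fintype.sum_sum_type, Fintype.sum_sum_type] at h
    simp only [Fzeta, Gam, Matrix.fromBlocks_apply₁₁, Matrix.fromBlocks_apply₁₂,
      Matrix.fromBlocks_apply₂₁, Matrix.fromBlocks_apply₂₂, Matrix.zero_apply,
      Matrix.one_apply, Matrix.neg_apply, Matrix.fromRows_apply_inl,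
      Matrix.fromRows_apply_inr, gvec, PiLp.toLp_apply, Fin.sum_univ_two, Sum.inl.injEq, Sum.inr.injEq,
      reduceCtorEq] at h
    have hw0 := hwzero 0
    have hw1 := hwzero 1
    have ha := (hαm i).ne'
    fin_cases i <;> simp [hw0, hw1] at h ha ⊢ <;> exact h.resolve_left ha
  have hzm : ∀ i : Fin 2, qmv (ζ t) i - qstar i + xcm (ζ t) i = 0 := by
    intro i
    have h := htanh i
    rw [Real.tanh_eq_sinh_div_cosh, div_eq_zero_iff] at h
    rcases h with h | h
    · have := Real.sinh_eq_zero.mp h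
      rcases mul_eq_zero.mp this with h' | h'
      · exact absurd h' (hβm i).ne'
      · exact h'
    · exact absurd h (Real.cosh_pos _).ne'
  have hxcm0 : xcm (ζ t) = 0 := by
    have hK0 : Kc.mulVec (xcm (ζ t)) = 0 := by
      rw [hxcm t]
      funext i
      rw [hzm i]
      simp
    by_contra hne
    have hpos := hKc.dotProduct_mulVec_pos hne
    rw [hK0] at hpos
    simp [dotProduct] at hpos
  have hqm : ∀ i : Fin 2, qmv (ζ t) i = qstar i := by
    intro i
    have h := hzm i
    have : xcm (ζ t) i = 0 := congrFun hxcm0 i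
    rw [this] at h
    linarith
  have hql : ∀ i : Fin 2, qlv (ζ t) i = qstar i := by
    intro i
    have := hwzero i
    rw [hqm i] at this
    linarith
  have hxcl : ∀ i : Fin 2, xcl (ζ t) i = 0 := by
    intro i
    have := hzl t i
    rw [hql i] at this
    linarith
  ext idx
  obtain (((i | i) | j) | (i | i)) := idx
  · exact hql i
  · exact hqm i
  · exact congrFun (hp t) j
  · exact hxcl i
  · exact congrFun hxcm0 i


end
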